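/- arXiv:1203.2377 — 6 statements merged into one kernel-verified Lean document; each statement's English description precedes it below -/
import Mathlib

section
/- Suppose A^S = [B G] Pᵗ where P is a permutation matrix, Y B = A, Y G = 0, G has full column rank, and A is nonsingular. Then A^S is nonsingular. -/
open Matrix

/-!
If `[B G] (x, y) = 0`, multiplying by `Y` kills the `G`-part (`Y G = 0`) and leaves `A x = 0`,
so `x = 0`; then `G y = 0`, and `y = 0` since `G` has full column rank. The permutation factor
has determinant `±1`.
-/

/-- The permutation matrix associated with a bijection `e` between (finite) index types. -/
noncomputable def permMat {κ γ : Type*} [DecidableEq γ] (e : κ ≃ γ) : Matrix κ γ ℝ :=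
  Matrix.of fun k c => if e k = c then 1 else 0

theorem permMat_eq_permMatrix {ι : Type*} [DecidableEq ι] (σ : Equiv.Perm ι) :
    permMat σ = σ.permMatrix ℝ := by
  ext i j
  simp [permMat, Equiv.Perm.permMatrix, PEquiv.toMatrix_apply]

theorem isUnit_det_permMat {ι : Type*} [Fintype ι] [DecidableEq ι] (σ : Equiv.Perm ι) :
    IsUnit (permMat σ).det := by
  rw [permMat_eq_permMatrix, det_permutation]
  exact (Equiv.Perm.sign σ).isUnit.map (Int.castRingHom ℝ)

theorem Matrix.fromCols_mulVec_injective {R ι m k p : Type*} [CommRing R] [Fintype ι]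
    [Fintype m] [Fintype k] {B : Matrix ι m R} {G : Matrix ι k R} (Y : Matrix p ι R)
    (hYB : Function.Injective (Y * B).mulVec) (hYG : Y * G = 0)
    (hG : Function.Injective G.mulVec) : Function.Injective (fromCols B G).mulVec := by
  intro v w hvw
  rw [fromCols_mulVec, fromCols_mulVec] at hvw
  have hY := congrArg (Y *ᵥ ·) hvw
  simp only [mulVec_add, mulVec_mulVec, hYG, zero_mulVec, add_zero] at hY
  have hl : v ∘ Sum.inl = w ∘ Sum.inl := hYB hY
  rw [hl, add_right_inj] at hvw
  have hr : v ∘ Sum.inr = w ∘ Sum.inr := hG hvw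
  ext (i | i)
  exacts [congrFun hl i, congrFun hr i]

theorem row_stretching_nonsingular_general {n k : ℕ}
    (A : Matrix (Fin n) (Fin n) ℝ)
    (B : Matrix (Fin n ⊕ Fin k) (Fin n) ℝ)
    (G : Matrix (Fin n ⊕ Fin k) (Fin k) ℝ)
    (e : (Fin n ⊕ Fin k) ≃ (Fin n ⊕ Fin k))
    (Y : Matrix (Fin n) (Fin n ⊕ Fin k) ℝ)
    (hYB : Y * B = A) (hYG : Y * G = 0)
    (hG : LinearIndependent ℝ Gᵀ)
    (hA : IsUnit A.det) :
    IsUnit (fromCols B G * (permMat e)ᵀ).det := by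
  have hA_inj : Function.Injective (Y * B).mulVec := by
    rwa [hYB, mulVec_injective_iff_isUnit, isUnit_iff_isUnit_det]
  have hBG : IsUnit (fromCols B G).det := by
    rw [← isUnit_iff_isUnit_det, ← mulVec_injective_iff_isUnit]
    exact fromCols_mulVec_injective Y hA_inj hYG (mulVec_injective_iff.mpr hG)
  rw [det_mul, det_transpose]
  exact hBG.mul (isUnit_det_permMat e)

/-- Theorem 2 (nonsingularity): if `A^S = [B G] Pᵗ` is a row stretching of a nonsingular
matrix `A` (i.e. `Y B = A`, `Y G = 0`, `G` of full column rank, `Y` of full row rank,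
`P` a permutation matrix), then `A^S` is nonsingular. -/
theorem row_stretching_nonsingular {n k : ℕ}
    (A : Matrix (Fin n) (Fin n) ℝ)
    (B : Matrix (Fin n ⊕ Fin k) (Fin n) ℝ)
    (G : Matrix (Fin n ⊕ Fin k) (Fin k) ℝ)
    (e : (Fin n ⊕ Fin k) ≃ (Fin n ⊕ Fin k))
    (Y : Matrix (Fin n) (Fin n ⊕ Fin k) ℝ)
    (hYB : Y * B = A) (hYG : Y * G = 0)
    (hG : LinearIndependent ℝ Gᵀ)
    (hY : LinearIndependent ℝ Y)
    (hA : IsUnit A.det) :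
    IsUnit (fromCols B G * (permMat e)ᵀ).det :=
  row_stretching_nonsingular_general A B G e Y hYB hYG hG hA
end

section
/- Under the row-stretching hypotheses (A^S = [B G]Pᵗ with Y B = A, Y G = 0, G of full column rank, A nonsingular), with X̄ := [I 0] Pᵗ and Ȳ any right inverse of Y, one has A⁻¹ = X̄ (A^S)⁻¹ Ȳ. -/
open Matrix

/-! Since `Y [B G] = [A 0] = A [I 0]`, multiplying on the right by `Pᵗ` gives `A X̄ = Y A^S`.
As `A^S` is invertible and `Y Ȳ = I`, this makes `X̄ (A^S)⁻¹ Ȳ` a right inverse of the square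
matrix `A`, hence its inverse. -/

namespace Matrix

variable {m l o R : Type*} [Fintype m] [DecidableEq m] [Fintype l] [CommRing R]

theorem mul_fromCols_one_zero_eq_mul_fromCols {A : Matrix m m R} {Y : Matrix m l R}
    {B : Matrix l m R} {G : Matrix l o R} (hYB : Y * B = A) (hYG : Y * G = 0) :
    A * fromCols (1 : Matrix m m R) (0 : Matrix m o R) = Y * fromCols B G := by
  rw [mul_fromCols, mul_fromCols, hYB, hYG, Matrix.mul_one, Matrix.mul_zero]

theorem inv_eq_of_mul_eq_mul_of_mul_eq_one [DecidableEq l] {A : Matrix m m R}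
    {X Y : Matrix m l R} {S : Matrix l l R} {Ybar : Matrix l m R} (hS : IsUnit S.det)
    (hAX : A * X = Y * S) (hYbar : Y * Ybar = 1) : A⁻¹ = X * S⁻¹ * Ybar := by
  refine inv_eq_right_inv ?_
  calc A * (X * S⁻¹ * Ybar) = Y * (S * S⁻¹) * Ybar := by
        simp only [← Matrix.mul_assoc, hAX]
    _ = 1 := by rw [mul_nonsing_inv S hS, Matrix.mul_one, hYbar]

end Matrix

theorem row_stretching_inverse_general {n k : ℕ}
    (A : Matrix (Fin n) (Fin n) ℝ)
    (B : Matrix (Fin n ⊕ Fin k) (Fin n) ℝ)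
    (G : Matrix (Fin n ⊕ Fin k) (Fin k) ℝ)
    (e : (Fin n ⊕ Fin k) ≃ (Fin n ⊕ Fin k))
    (Y : Matrix (Fin n) (Fin n ⊕ Fin k) ℝ)
    (Ybar : Matrix (Fin n ⊕ Fin k) (Fin n) ℝ)
    (hYB : Y * B = A) (hYG : Y * G = 0)
    (hAS : IsUnit (fromCols B G * (permMat e)ᵀ).det)
    (hYbar : Y * Ybar = 1) :
    A⁻¹ = (fromCols (1 : Matrix (Fin n) (Fin n) ℝ) (0 : Matrix (Fin n) (Fin k) ℝ) *
        (permMat e)ᵀ) * (fromCols B G * (permMat e)ᵀ)⁻¹ * Ybar := by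
  refine inv_eq_of_mul_eq_mul_of_mul_eq_one hAS ?_ hYbar
  rw [← Matrix.mul_assoc, ← Matrix.mul_assoc, mul_fromCols_one_zero_eq_mul_fromCols hYB hYG]

/-- Theorem 2 (inverse formula): under the row-stretching hypotheses
(`A^S = [B G]Pᵗ`, `Y B = A`, `Y G = 0`, `G` of full column rank, `Y` of full row rank,
`A` nonsingular, `A^S` nonsingular), with `X̄ := [I 0] Pᵗ` and `Ȳ` any right inverse
of `Y`, one has `A⁻¹ = X̄ (A^S)⁻¹ Ȳ`. -/
theorem row_stretching_inverse {n k : ℕ}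
    (A : Matrix (Fin n) (Fin n) ℝ)
    (B : Matrix (Fin n ⊕ Fin k) (Fin n) ℝ)
    (G : Matrix (Fin n ⊕ Fin k) (Fin k) ℝ)
    (e : (Fin n ⊕ Fin k) ≃ (Fin n ⊕ Fin k))
    (Y : Matrix (Fin n) (Fin n ⊕ Fin k) ℝ)
    (Ybar : Matrix (Fin n ⊕ Fin k) (Fin n) ℝ)
    (hYB : Y * B = A) (hYG : Y * G = 0)
    (hG : LinearIndependent ℝ Gᵀ)
    (hY : LinearIndependent ℝ Y)
    (hA : IsUnit A.det)
    (hAS : IsUnit (fromCols B G * (permMat e)ᵀ).det)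
    (hYbar : Y * Ybar = 1) :
    A⁻¹ = (fromCols (1 : Matrix (Fin n) (Fin n) ℝ) (0 : Matrix (Fin n) (Fin k) ℝ) *
        (permMat e)ᵀ) * (fromCols B G * (permMat e)ᵀ)⁻¹ * Ybar :=
  row_stretching_inverse_general A B G e Y Ybar hYB hYG hAS hYbar
end

section
/- For a row stretching A → A^S with A nonsingular, if A^S z = Ȳ y (where Ȳ is a right inverse of Y) and A x = y, then z = X x where X := (A^S)⁻¹ Ȳ A; in particular X̄ z = x with X̄ := [I 0]Pᵗ. -/
open Matrix

lemma permMat_eq_permMatrix_s5 {κ : Type*} [DecidableEq κ] (e : Equiv.Perm κ) :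
    permMat e = e.permMatrix ℝ := by
  ext i j
  simp [permMat, Equiv.toPEquiv_apply, eq_comm]

lemma isUnit_transpose_permMat {κ : Type*} [DecidableEq κ] [Fintype κ] (e : Equiv.Perm κ) :
    IsUnit (permMat e)ᵀ := by
  rw [isUnit_transpose, isUnit_iff_isUnit_det, permMat_eq_permMatrix_s5, det_permutation]
  exact (Equiv.Perm.sign e).isUnit.map (Int.castRingHom ℝ)

section Stretching

variable {R l m p q : Type*} [Ring R] [Fintype l] [Fintype m] [Fintype p]
  {Y : Matrix q l R} {A : Matrix q m R} {B : Matrix l m R} {G : Matrix l p R}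

lemma mul_fromCols_eq_mul_fromCols_one_zero [DecidableEq m] (hYB : Y * B = A) (hYG : Y * G = 0)
    {r : Type*} (Q : Matrix (m ⊕ p) r R) :
    Y * (fromCols B G * Q) = A * (fromCols (1 : Matrix m m R) (0 : Matrix m p R) * Q) := by
  rw [← Matrix.mul_assoc, ← Matrix.mul_assoc, mul_fromCols, mul_fromCols, hYB, hYG,
    Matrix.mul_one, Matrix.mul_zero]

lemma mulVec_injective_fromCols (hA : Function.Injective A.mulVec) (hYB : Y * B = A)
    (hYG : Y * G = 0) (hG : Function.Injective G.mulVec) :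
    Function.Injective (fromCols B G).mulVec := by
  intro u v huv
  have hYuv := congrArg Y.mulVec huv
  simp only [fromCols_mulVec, mulVec_add, mulVec_mulVec, hYB, hYG, zero_mulVec,
    add_zero] at hYuv
  have hinl : u ∘ Sum.inl = v ∘ Sum.inl := hA hYuv
  rw [fromCols_mulVec, fromCols_mulVec, hinl, add_right_inj] at huv
  have hinr : u ∘ Sum.inr = v ∘ Sum.inr := hG huv
  ext (i | i)
  exacts [congrFun hinl i, congrFun hinr i]

end Stretching

theorem row_stretching_solution_general {n k : ℕ}
    (A : Matrix (Fin n) (Fin n) ℝ)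
    (B : Matrix (Fin n ⊕ Fin k) (Fin n) ℝ)
    (G : Matrix (Fin n ⊕ Fin k) (Fin k) ℝ)
    (e : (Fin n ⊕ Fin k) ≃ (Fin n ⊕ Fin k))
    (Y : Matrix (Fin n) (Fin n ⊕ Fin k) ℝ)
    (Ybar : Matrix (Fin n ⊕ Fin k) (Fin n) ℝ)
    (hYB : Y * B = A) (hYG : Y * G = 0)
    (hG : LinearIndependent ℝ Gᵀ)
    (hA : IsUnit A.det)
    (hYbar : Y * Ybar = 1)
    (x y : Fin n → ℝ) (z : (Fin n ⊕ Fin k) → ℝ)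
    (hx : A.mulVec x = y)
    (hz : (fromCols B G * (permMat e)ᵀ).mulVec z = Ybar.mulVec y) :
    z = ((fromCols B G * (permMat e)ᵀ)⁻¹ * Ybar * A).mulVec x ∧
      ((fromCols (1 : Matrix (Fin n) (Fin n) ℝ) (0 : Matrix (Fin n) (Fin k) ℝ) *
        (permMat e)ᵀ)).mulVec z = x := by
  have hAinj : Function.Injective A.mulVec :=
    mulVec_injective_iff_isUnit.mpr ((isUnit_iff_isUnit_det A).mpr hA)
  have hBG : IsUnit (fromCols B G) := mulVec_injective_iff_isUnit.mp <|
    mulVec_injective_fromCols hAinj hYB hYG (mulVec_injective_iff.mpr hG)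
  have hAS : IsUnit (fromCols B G * (permMat e)ᵀ).det :=
    (isUnit_iff_isUnit_det _).mp (hBG.mul (isUnit_transpose_permMat e))
  constructor
  · rw [← mulVec_mulVec, ← mulVec_mulVec, hx, ← hz, mulVec_mulVec, nonsing_inv_mul _ hAS,
      one_mulVec]
  · apply hAinj
    rw [mulVec_mulVec, ← mul_fromCols_eq_mul_fromCols_one_zero hYB hYG, ← mulVec_mulVec, hz,
      mulVec_mulVec, hYbar, one_mulVec, hx]

/-- Corollary to Theorem 2 (row case): for a row stretching `A → A^S = [B G]Pᵗ` with `A`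
nonsingular, if `A^S z = Ȳ y` (with `Ȳ` a right inverse of `Y`) and `A x = y`, then
`z = X x` with `X := (A^S)⁻¹ Ȳ A`, and in particular `X̄ z = x` with `X̄ := [I 0]Pᵗ`. -/
theorem row_stretching_solution {n k : ℕ}
    (A : Matrix (Fin n) (Fin n) ℝ)
    (B : Matrix (Fin n ⊕ Fin k) (Fin n) ℝ)
    (G : Matrix (Fin n ⊕ Fin k) (Fin k) ℝ)
    (e : (Fin n ⊕ Fin k) ≃ (Fin n ⊕ Fin k))
    (Y : Matrix (Fin n) (Fin n ⊕ Fin k) ℝ)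
    (Ybar : Matrix (Fin n ⊕ Fin k) (Fin n) ℝ)
    (hYB : Y * B = A) (hYG : Y * G = 0)
    (hG : LinearIndependent ℝ Gᵀ)
    (hY : LinearIndependent ℝ Y)
    (hA : IsUnit A.det)
    (hYbar : Y * Ybar = 1)
    (x y : Fin n → ℝ) (z : (Fin n ⊕ Fin k) → ℝ)
    (hx : A.mulVec x = y)
    (hz : (fromCols B G * (permMat e)ᵀ).mulVec z = Ybar.mulVec y) :
    z = ((fromCols B G * (permMat e)ᵀ)⁻¹ * Ybar * A).mulVec x ∧
      ((fromCols (1 : Matrix (Fin n) (Fin n) ℝ) (0 : Matrix (Fin n) (Fin k) ℝ) *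
        (permMat e)ᵀ)).mulVec z = x :=
  row_stretching_solution_general A B G e Y Ybar hYB hYG hG hA hYbar x y z hx hz
end

section
/- Let A be partitioned as A = [A₁; A₂] (rows), with columns partitioned into m blocks, and let A^S be the simple row stretching of A using nonsingular matrices D₁,…,D_{m−1} (without reordering). Then det A^S = det A · ∏_{j=1}^{m−1} det D_j. -/
/-! Reorder the rows of `A^S` so that the first stretched block row sits next to `A₁`, and add
all the other stretched block rows to it. The pieces `A₂ⱼ` then reassemble `A₂`, while in every
glue column `D_t` occurs once with each sign and cancels. The result is block lower triangular,
with diagonal blocks `A` and the block upper bidiagonal glue matrix, whose diagonal blocks are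
the `D_t`. -/

open Matrix

/-- The original matrix `A = [A₁; A₂]` with row blocks `A₁` (p rows) and `A₂` (q rows)
and columns partitioned into `m = m' + 1` blocks of sizes `nn j`. -/
def origMat {p q m' : ℕ} (nn : Fin (m' + 1) → ℕ)
    (A₁ : ∀ j, Matrix (Fin p) (Fin (nn j)) ℝ)
    (A₂ : ∀ j, Matrix (Fin q) (Fin (nn j)) ℝ) :
    Matrix (Fin p ⊕ Fin q) (Σ j, Fin (nn j)) ℝ :=
  Matrix.of fun r c =>
    match r with
    | Sum.inl i => A₁ c.1 i c.2
    | Sum.inr i => A₂ c.1 i c.2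

/-- The simple row stretching of `A` (without reordering): the `A₁` rows are kept, the
dense row block `A₂` is stretched into `m = m' + 1` row blocks, block `j` carrying
`A₂ⱼ` together with glue entries `+D_{j-1}` and `−D_j` in the new columns. -/
def simpleRowStretch {p q m' : ℕ} (nn : Fin (m' + 1) → ℕ)
    (A₁ : ∀ j, Matrix (Fin p) (Fin (nn j)) ℝ)
    (A₂ : ∀ j, Matrix (Fin q) (Fin (nn j)) ℝ)
    (D : Fin m' → Matrix (Fin q) (Fin q) ℝ) :
    Matrix (Fin p ⊕ (Fin (m' + 1) × Fin q)) ((Σ j, Fin (nn j)) ⊕ (Fin m' × Fin q)) ℝ :=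
  Matrix.of fun r c =>
    match r, c with
    | Sum.inl i, Sum.inl c => A₁ c.1 i c.2
    | Sum.inl _, Sum.inr _ => 0
    | Sum.inr (j, i), Sum.inl c => if c.1 = j then A₂ c.1 i c.2 else 0
    | Sum.inr (j, i), Sum.inr (t, cc) =>
        (if (t : ℕ) = (j : ℕ) then -(D t i cc) else 0) +
          (if (t : ℕ) + 1 = (j : ℕ) then D t i cc else 0)

namespace Matrix

variable {R : Type*} [CommRing R]

theorem det_fromBlocks_of_add_mul_eq_zero {m n : Type*} [Fintype m] [DecidableEq m]
    [Fintype n] [DecidableEq n] (X : Matrix m m R) (Y : Matrix m n R) (Z : Matrix n m R)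
    (N : Matrix n n R) (B : Matrix m n R) (h : Y + B * N = 0) :
    (fromBlocks X Y Z N).det = (X + B * Z).det * N.det := by
  have hrow : fromBlocks 1 B 0 1 * fromBlocks X Y Z N = fromBlocks (X + B * Z) 0 Z N := by
    simp [fromBlocks_multiply, h]
  calc (fromBlocks X Y Z N).det = (fromBlocks 1 B 0 1 * fromBlocks X Y Z N).det := by
        simp [det_mul]
    _ = (X + B * Z).det * N.det := by rw [hrow, det_fromBlocks_zero₁₂]

theorem BlockTriangular.det_prod_fst {ι κ : Type*} [Fintype ι] [LinearOrder ι]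
    [Fintype κ] [DecidableEq κ] {M : Matrix (ι × κ) (ι × κ) R}
    (h : M.BlockTriangular Prod.fst) :
    M.det = ∏ t, (of fun k k' => M (t, k) (t, k')).det := by
  rw [h.det_fintype]
  refine Finset.prod_congr rfl fun t _ => ?_
  let σ : {a : ι × κ // a.1 = t} ≃ κ :=
    { toFun := fun a => a.1.2
      invFun := fun k => ⟨(t, k), rfl⟩
      left_inv := by rintro ⟨⟨t, k⟩, rfl⟩; rfl
      right_inv := fun _ => rfl }
  rw [← det_submatrix_equiv_self σ]
  congr 1
  ext ⟨⟨t₁, k⟩, rfl⟩ ⟨⟨t₂, k'⟩, h₂⟩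
  obtain rfl : t₂ = t₁ := h₂
  rfl

end Matrix

open Matrix

def collapseRows {ι J κ ν R : Type*} [Fintype J] [AddCommMonoid R]
    (S : Matrix (ι ⊕ (J × κ)) ν R) : Matrix (ι ⊕ κ) ν R :=
  fromRows (S.submatrix Sum.inl id) (of fun k c => ∑ j, S (Sum.inr (j, k)) c)

def stretchRowEquiv (ι κ : Type*) (m : ℕ) : (ι ⊕ κ) ⊕ (Fin m × κ) ≃ ι ⊕ (Fin (m + 1) × κ) :=
  (Equiv.sumAssoc _ _ _).trans <| Equiv.sumCongr (Equiv.refl ι) <|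
    optionProdEquiv.symm.trans <| Equiv.prodCongr (finSuccEquiv m).symm (Equiv.refl κ)

theorem det_submatrix_stretchRowEquiv {ι κ ν R : Type*} [Fintype ι] [DecidableEq ι]
    [Fintype κ] [DecidableEq κ] [CommRing R] {m : ℕ}
    (S : Matrix (ι ⊕ (Fin (m + 1) × κ)) (ν ⊕ (Fin m × κ)) R) (e : ι ⊕ κ ≃ ν)
    (hglue : (collapseRows S).submatrix id Sum.inr = 0) :
    (S.submatrix (stretchRowEquiv ι κ m) (Sum.map e id)).det =
      ((collapseRows S).submatrix id (Sum.inl ∘ e)).det *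
        (S.submatrix (fun a : Fin m × κ => Sum.inr (a.1.succ, a.2)) Sum.inr).det := by
  set M := S.submatrix (stretchRowEquiv ι κ m) (Sum.map e id)
  let B : Matrix (ι ⊕ κ) (Fin m × κ) R := fromRows 0 (of fun k a => if a.2 = k then 1 else 0)
  have hsum :
      ∀ r c, M.toRows₁ r c + (B * M.toRows₂) r c = collapseRows S r (Sum.map e id c) := by
    rintro (i | k) c
    · simp [B, collapseRows, M, stretchRowEquiv]
    · simp [B, collapseRows, M, mul_apply, Fintype.sum_prod_type, Fin.sum_univ_succ (n := m),
        stretchRowEquiv]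
  rw [← fromBlocks_toBlocks M, det_fromBlocks_of_add_mul_eq_zero _ _ _ _ B]
  · congr 2
    ext r c
    exact hsum r (Sum.inl c)
  · ext r c
    exact (hsum r (Sum.inr c)).trans (congrFun (congrFun hglue r) c)

section SimpleRowStretch

variable {p q m' : ℕ} (nn : Fin (m' + 1) → ℕ) (A₁ : ∀ j, Matrix (Fin p) (Fin (nn j)) ℝ)
  (A₂ : ∀ j, Matrix (Fin q) (Fin (nn j)) ℝ) (D : Fin m' → Matrix (Fin q) (Fin q) ℝ)

theorem collapseRows_simpleRowStretch :
    collapseRows (simpleRowStretch nn A₁ A₂ D) = fromCols (origMat nn A₁ A₂) 0 := by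
  ext (i | k) (c | ⟨t, l⟩)
  · rfl
  · rfl
  · simp [collapseRows, simpleRowStretch, origMat]
  · have hcast : ∀ j : Fin (m' + 1), ((t : ℕ) = j ↔ t.castSucc = j) := fun j => by
      simp [Fin.ext_iff]
    have hsucc : ∀ j : Fin (m' + 1), ((t : ℕ) + 1 = j ↔ t.succ = j) := fun j => by
      simp [Fin.ext_iff]
    simp [collapseRows, simpleRowStretch, Finset.sum_add_distrib, hcast, hsucc]

theorem det_simpleRowStretch_glue :
    ((simpleRowStretch nn A₁ A₂ D).submatrix
      (fun a : Fin m' × Fin q => Sum.inr (a.1.succ, a.2)) Sum.inr).det = ∏ t, (D t).det := by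
  have htri : ((simpleRowStretch nn A₁ A₂ D).submatrix
      (fun a : Fin m' × Fin q => Sum.inr (a.1.succ, a.2)) Sum.inr).BlockTriangular Prod.fst := by
    rintro ⟨t, k⟩ ⟨s, l⟩ (hst : s < t)
    have h₁ : (s : ℕ) ≠ t + 1 := by omega
    have h₂ : (s : ℕ) ≠ t := by omega
    simp [simpleRowStretch, h₁, h₂]
  rw [htri.det_prod_fst]
  congr! with t
  ext k l
  simp [simpleRowStretch]

end SimpleRowStretch

theorem simple_row_stretch_det_general {p q m' : ℕ} (nn : Fin (m' + 1) → ℕ)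
    (A₁ : ∀ j, Matrix (Fin p) (Fin (nn j)) ℝ)
    (A₂ : ∀ j, Matrix (Fin q) (Fin (nn j)) ℝ)
    (D : Fin m' → Matrix (Fin q) (Fin q) ℝ)
    (e : (Fin p ⊕ Fin q) ≃ (Σ j, Fin (nn j)))
    (F : (Fin p ⊕ (Fin (m' + 1) × Fin q)) ≃ ((Σ j, Fin (nn j)) ⊕ (Fin m' × Fin q)))
    (hF1 : ∀ i : Fin p, F (Sum.inl i) = Sum.inl (e (Sum.inl i)))
    (hF2 : ∀ i : Fin q, F (Sum.inr (0, i)) = Sum.inl (e (Sum.inr i)))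
    (hF3 : ∀ (t : Fin m') (i : Fin q), F (Sum.inr (t.succ, i)) = Sum.inr (t, i)) :
    ((simpleRowStretch nn A₁ A₂ D).submatrix id F).det =
      ((origMat nn A₁ A₂).submatrix id e).det * ∏ t, (D t).det := by
  have hF : F ∘ stretchRowEquiv _ _ _ = Sum.map e id := by
    funext x
    rcases x with (i | i) | ⟨t, i⟩
    exacts [hF1 i, hF2 i, hF3 t i]
  have hglue : (collapseRows (simpleRowStretch nn A₁ A₂ D)).submatrix id Sum.inr = 0 := by
    rw [collapseRows_simpleRowStretch]
    rfl
  rw [← det_submatrix_equiv_self (stretchRowEquiv _ _ _), submatrix_submatrix, Function.id_comp,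
    hF, det_submatrix_stretchRowEquiv _ _ hglue, collapseRows_simpleRowStretch,
    det_simpleRowStretch_glue]
  rfl

/-- Theorem 4: for a simple row stretching (without reordering) with nonsingular glue
matrices `D₁, …, D_{m−1}`, one has `det A^S = det A · ∏ⱼ det Dⱼ`.  Here `e` aligns the
rows of `A` with its columns (so `A` is square) and `F` is the induced positional
alignment of the rows of `A^S` with its columns. -/
theorem simple_row_stretch_det {p q m' : ℕ} (nn : Fin (m' + 1) → ℕ)
    (A₁ : ∀ j, Matrix (Fin p) (Fin (nn j)) ℝ)
    (A₂ : ∀ j, Matrix (Fin q) (Fin (nn j)) ℝ)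
    (D : Fin m' → Matrix (Fin q) (Fin q) ℝ)
    (hD : ∀ t, IsUnit (D t).det)
    (e : (Fin p ⊕ Fin q) ≃ (Σ j, Fin (nn j)))
    (F : (Fin p ⊕ (Fin (m' + 1) × Fin q)) ≃ ((Σ j, Fin (nn j)) ⊕ (Fin m' × Fin q)))
    (hF1 : ∀ i : Fin p, F (Sum.inl i) = Sum.inl (e (Sum.inl i)))
    (hF2 : ∀ i : Fin q, F (Sum.inr (0, i)) = Sum.inl (e (Sum.inr i)))
    (hF3 : ∀ (t : Fin m') (i : Fin q), F (Sum.inr (t.succ, i)) = Sum.inr (t, i)) :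
    ((simpleRowStretch nn A₁ A₂ D).submatrix id F).det =
      ((origMat nn A₁ A₂).submatrix id e).det * ∏ t, (D t).det :=
  simple_row_stretch_det_general nn A₁ A₂ D e F hF1 hF2 hF3
end

section
/- The composition of two row stretchings is a row stretching: if A → A^S via (B₁, G₁, P₁, Y₁) and A^S → A^{SS} via (B₂, G₂, P₂, Y₂), then A → A^{SS} is a row stretching with parameter matrix Y = Y₁ Y₂ (suitably composed), the combined glue has full column rank, and the combined permutation is a permutation matrix. -/
/-! Since `Y₂ B₂ = A^S = [B₁ G₁] P₁ᵗ`, reading the columns of `B₂` in the order given by `P₁`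
splits them into `B₁^S` and `G₁^S` with `Y₂ B₁^S = B₁` and `Y₂ G₁^S = G₁`. Hence
`Y₁ Y₂ B₁^S = A` and `Y₁ Y₂ [G₁^S G₂] = [Y₁ G₁  Y₁ 0] = 0`. The rows of `Y₁ Y₂` are independent
because `x ↦ x Y₁ Y₂` is a composite of injective maps, and if `G₁^S x + G₂ y = 0` then applying
`Y₂` gives `G₁ x = 0`, so `x = 0` and then `y = 0`. -/

open Matrix

namespace Matrix

variable {l m n κ a b c R : Type*}

lemma mul_permMat_transpose [Fintype n] [DecidableEq n] (M : Matrix m n ℝ) (e : κ ≃ n) :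
    M * (permMat e)ᵀ = M.submatrix id e := by
  ext r k
  simp [mul_apply, permMat]

lemma mul_submatrix_id [Fintype m] [Semiring R] (Y : Matrix l m R) (B : Matrix m n R)
    (f : κ → n) : Y * B.submatrix id f = (Y * B).submatrix id f := by
  ext; simp [mul_apply]

lemma fromCols_toCols_submatrix_sumAssoc (M : Matrix m κ R) (N : Matrix m c R)
    (e : κ ≃ a ⊕ b) :
    (fromCols (M.submatrix id e.symm).toCols₁
        (fromCols (M.submatrix id e.symm).toCols₂ N)).submatrix id
      ((e.sumCongr (Equiv.refl c)).trans (Equiv.sumAssoc a b c)) = fromCols M N := by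
  ext r (k | g)
  · obtain ⟨i | j, rfl⟩ := e.symm.surjective k <;> simp
  · simp

lemma linearIndependent_rows_mul [Fintype l] [Fintype m] [Semiring R]
    {Y₁ : Matrix l m R} {Y₂ : Matrix m n R}
    (h₁ : LinearIndependent R Y₁) (h₂ : LinearIndependent R Y₂) :
    LinearIndependent R (Y₁ * Y₂) := by
  refine vecMul_injective_iff.mp ?_
  simpa only [Function.comp_def, vecMul_vecMul] using
    (vecMul_injective_iff.mpr h₂).comp (vecMul_injective_iff.mpr h₁)

lemma linearIndependent_fromCols_transpose [Fintype m] [Fintype a] [Fintype b] [CommRing R]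
    {Y : Matrix l m R} {G : Matrix m a R} {G' : Matrix l a R} {H : Matrix m b R}
    (hYG : Y * G = G') (hYH : Y * H = 0)
    (hG' : LinearIndependent R G'ᵀ) (hH : LinearIndependent R Hᵀ) :
    LinearIndependent R (fromCols G H)ᵀ := by
  replace hG' := mulVec_injective_iff.mpr hG'
  replace hH := mulVec_injective_iff.mpr hH
  refine mulVec_injective_iff.mp fun v w hvw => ?_
  simp only [fromCols_mulVec] at hvw
  have hl : v ∘ Sum.inl = w ∘ Sum.inl := hG' <| by
    simpa [mulVec_add, mulVec_mulVec, hYG, hYH] using congrArg (Y *ᵥ ·) hvw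
  rw [hl, add_right_inj] at hvw
  rw [← Sum.elim_comp_inl_inr v, ← Sum.elim_comp_inl_inr w, hl, hH hvw]

end Matrix

theorem row_stretching_comp_general {ι κ μ γ₁ γ₂ : Type*}
    [Fintype ι] [Fintype κ] [Fintype μ] [Fintype γ₁] [Fintype γ₂]
    [DecidableEq ι] [DecidableEq κ] [DecidableEq γ₁] [DecidableEq γ₂]
    (A : Matrix ι ι ℝ) (AS : Matrix κ κ ℝ) (ASS : Matrix μ μ ℝ)
    (B₁ : Matrix κ ι ℝ) (G₁ : Matrix κ γ₁ ℝ) (e₁ : κ ≃ ι ⊕ γ₁) (Y₁ : Matrix ι κ ℝ)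
    (B₂ : Matrix μ κ ℝ) (G₂ : Matrix μ γ₂ ℝ) (e₂ : μ ≃ κ ⊕ γ₂) (Y₂ : Matrix κ μ ℝ)
    (h₁ : AS = fromCols B₁ G₁ * (permMat e₁)ᵀ)
    (hY₁B : Y₁ * B₁ = A) (hY₁G : Y₁ * G₁ = 0)
    (hY₁ : LinearIndependent ℝ Y₁) (hG₁ : LinearIndependent ℝ G₁ᵀ)
    (h₂ : ASS = fromCols B₂ G₂ * (permMat e₂)ᵀ)
    (hY₂B : Y₂ * B₂ = AS) (hY₂G : Y₂ * G₂ = 0)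
    (hY₂ : LinearIndependent ℝ Y₂) (hG₂ : LinearIndependent ℝ G₂ᵀ) :
    -- combined data: B := B₁^S, G := [G₁^S G₂], P := induced permutation, Y := Y₁Y₂
    (ASS = fromCols (Matrix.of fun r i => B₂ r (e₁.symm (Sum.inl i)))
          (fromCols (Matrix.of fun r g => B₂ r (e₁.symm (Sum.inr g))) G₂) *
        (permMat (e₂.trans ((e₁.sumCongr (Equiv.refl γ₂)).trans
          (Equiv.sumAssoc ι γ₁ γ₂))))ᵀ) ∧
    (Y₁ * Y₂) * (Matrix.of fun r i => B₂ r (e₁.symm (Sum.inl i))) = A ∧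
    (Y₁ * Y₂) * (fromCols (Matrix.of fun r g => B₂ r (e₁.symm (Sum.inr g))) G₂) = 0 ∧
    LinearIndependent ℝ (Y₁ * Y₂) ∧
    LinearIndependent ℝ (fromCols (Matrix.of fun r g => B₂ r (e₁.symm (Sum.inr g))) G₂)ᵀ := by
  have hcols₁ : (Matrix.of fun r i => B₂ r (e₁.symm (Sum.inl i))) =
      (B₂.submatrix id e₁.symm).toCols₁ := rfl
  have hcols₂ : (Matrix.of fun r g => B₂ r (e₁.symm (Sum.inr g))) =
      (B₂.submatrix id e₁.symm).toCols₂ := rfl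
  rw [mul_permMat_transpose] at h₁ h₂
  have hsplit : Y₂ * B₂.submatrix id e₁.symm = fromCols B₁ G₁ := by
    rw [mul_submatrix_id, hY₂B, h₁, submatrix_submatrix]
    simp
  obtain ⟨hB, hG⟩ : Y₂ * (B₂.submatrix id e₁.symm).toCols₁ = B₁ ∧
      Y₂ * (B₂.submatrix id e₁.symm).toCols₂ = G₁ := by
    rw [← fromCols_ext_iff, ← mul_fromCols, fromCols_toCols, hsplit]
  rw [hcols₁, hcols₂, mul_permMat_transpose]
  refine ⟨?_, by rw [Matrix.mul_assoc, hB, hY₁B], ?_, linearIndependent_rows_mul hY₁ hY₂,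
    linearIndependent_fromCols_transpose hG hY₂G hG₁ hG₂⟩
  · rw [h₂, ← fromCols_toCols_submatrix_sumAssoc B₂ G₂ e₁, submatrix_submatrix]
    rfl
  · rw [Matrix.mul_assoc, mul_fromCols, hG, hY₂G, mul_fromCols, hY₁G, Matrix.mul_zero,
      fromCols_zero]

/-- Lemma 1 to Theorem 5: a sequence of two row stretchings is a row stretching.  If
`A → A^S` is a row stretching with data `(B₁, G₁, P₁, Y₁)` and `A^S → A^{SS}` one with
data `(B₂, G₂, P₂, Y₂)`, then `A → A^{SS}` is a row stretching with parameter matrix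
`Y = Y₁ Y₂`, carrier `B = B₁^S`, glue `G = [G₁^S G₂]` of full column rank, and the
combined column rearrangement a permutation. -/
theorem row_stretching_comp {ι κ μ γ₁ γ₂ : Type*}
    [Fintype ι] [Fintype κ] [Fintype μ] [Fintype γ₁] [Fintype γ₂]
    [DecidableEq ι] [DecidableEq κ] [DecidableEq μ] [DecidableEq γ₁] [DecidableEq γ₂]
    (A : Matrix ι ι ℝ) (AS : Matrix κ κ ℝ) (ASS : Matrix μ μ ℝ)
    (B₁ : Matrix κ ι ℝ) (G₁ : Matrix κ γ₁ ℝ) (e₁ : κ ≃ ι ⊕ γ₁) (Y₁ : Matrix ι κ ℝ)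
    (B₂ : Matrix μ κ ℝ) (G₂ : Matrix μ γ₂ ℝ) (e₂ : μ ≃ κ ⊕ γ₂) (Y₂ : Matrix κ μ ℝ)
    (h₁ : AS = fromCols B₁ G₁ * (permMat e₁)ᵀ)
    (hY₁B : Y₁ * B₁ = A) (hY₁G : Y₁ * G₁ = 0)
    (hY₁ : LinearIndependent ℝ Y₁) (hG₁ : LinearIndependent ℝ G₁ᵀ)
    (h₂ : ASS = fromCols B₂ G₂ * (permMat e₂)ᵀ)
    (hY₂B : Y₂ * B₂ = AS) (hY₂G : Y₂ * G₂ = 0)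
    (hY₂ : LinearIndependent ℝ Y₂) (hG₂ : LinearIndependent ℝ G₂ᵀ) :
    -- combined data: B := B₁^S, G := [G₁^S G₂], P := induced permutation, Y := Y₁Y₂
    (ASS = fromCols (Matrix.of fun r i => B₂ r (e₁.symm (Sum.inl i)))
          (fromCols (Matrix.of fun r g => B₂ r (e₁.symm (Sum.inr g))) G₂) *
        (permMat (e₂.trans ((e₁.sumCongr (Equiv.refl γ₂)).trans
          (Equiv.sumAssoc ι γ₁ γ₂))))ᵀ) ∧
    (Y₁ * Y₂) * (Matrix.of fun r i => B₂ r (e₁.symm (Sum.inl i))) = A ∧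
    (Y₁ * Y₂) * (fromCols (Matrix.of fun r g => B₂ r (e₁.symm (Sum.inr g))) G₂) = 0 ∧
    LinearIndependent ℝ (Y₁ * Y₂) ∧
    LinearIndependent ℝ (fromCols (Matrix.of fun r g => B₂ r (e₁.symm (Sum.inr g))) G₂)ᵀ :=
  row_stretching_comp_general A AS ASS B₁ G₁ e₁ Y₁ B₂ G₂ e₂ Y₂ h₁ hY₁B hY₁G hY₁ hG₁ h₂ hY₂B hY₂G hY₂
    hG₂
end

section
/- Let G be a matrix in which every column has exactly two nonzero entries, the row graph of G is a tree, and every non-loop edge of the row graph has weight 1 (i.e., no two rows share nonzeros in more than one common column). Then deleting any single row of G yields a nonsingular square matrix. -/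
open Matrix

/-!
Root the row graph at the deleted row `i₀`. Every other row `v` has a parent `w` one step
closer to `i₀`, and a column `c v` in which both `v` and `w` are nonzero. Since a column has only
two nonzero entries, these are exactly the entries of `c v`, so `v ↦ c v` is injective: two rows
sharing their parent column would each be the parent of the other. After permuting the columns
by `c`, row `v` is nonzero only on its own column and on the columns of its children, which lie
farther from `i₀`; ordering rows by distance to `i₀` makes the matrix triangular with nonzero
diagonal.
-/

/-- The row graph of a matrix: vertices are rows; two distinct rows are adjacent when
they have nonzero entries in some common column. -/
def rowGraph {ρ κ : Type*} (M : Matrix ρ κ ℝ) : SimpleGraph ρ where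
  Adj i j := i ≠ j ∧ ∃ c, M i c ≠ 0 ∧ M j c ≠ 0
  symm := ⟨by rintro i j ⟨h, c, h1, h2⟩; exact ⟨h.symm, c, h2, h1⟩⟩
  loopless := ⟨by intro i h; exact h.1 rfl⟩

open Finset

theorem Matrix.det_eq_prod_diag_of_lt_of_ne_zero {ι R α : Type*} [Fintype ι] [DecidableEq ι]
    [CommRing R] [LinearOrder α] (M : Matrix ι ι R) (f : ι → α)
    (hM : ∀ i j, i ≠ j → M i j ≠ 0 → f i < f j) : M.det = ∏ i, M i i := by
  classical
  have htri : M.BlockTriangular f := fun i j hji => by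
    by_contra hij
    by_cases h : i = j
    · exact (h ▸ hji).false
    · exact (hM i j h hij).asymm hji
  have hblock : ∀ a, M.toSquareBlock f a = diagonal fun i : {i // f i = a} => M i i := by
    intro a
    ext i j
    by_cases h : i = j
    · simp [h, toSquareBlock_def]
    · rw [diagonal_apply_ne _ h, toSquareBlock_def, of_apply]
      by_contra hij
      exact (hM i j (Subtype.coe_injective.ne h) hij).ne (i.2.trans j.2.symm)
  rw [htri.det, ← prod_fiberwise_of_maps_to (t := univ.image f) (g := f)
    (fun i _ => mem_image_of_mem f (mem_univ i))]
  refine prod_congr rfl fun a _ => ?_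
  rw [hblock, det_diagonal, ← prod_subtype_eq_prod_filter, subtype_univ]

theorem Matrix.det_ne_zero_of_injective_of_lt_of_ne_zero {ι R α : Type*} [Fintype ι]
    [DecidableEq ι] [CommRing R] [IsDomain R] [LinearOrder α] (M : Matrix ι ι R)
    (col : ι → ι) (hcol : Function.Injective col) (f : ι → α) (hdiag : ∀ i, M i (col i) ≠ 0)
    (hM : ∀ i j, i ≠ j → M i (col j) ≠ 0 → f i < f j) : M.det ≠ 0 := by
  set e : Equiv.Perm ι := Equiv.ofBijective col (Finite.injective_iff_bijective.mp hcol)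
  have hperm : (M.submatrix id e).det = Equiv.Perm.sign e * M.det := det_permute' e M
  have htri : (M.submatrix id e).det = ∏ i, M i (col i) :=
    det_eq_prod_diag_of_lt_of_ne_zero (M.submatrix id e) f hM
  intro hdet
  rw [hdet, mul_zero, htri] at hperm
  exact prod_ne_zero_iff.mpr (fun i _ => hdiag i) hperm

theorem SimpleGraph.Reachable.exists_adj_dist_add_one_eq {V : Type*} {G : SimpleGraph V}
    {u v : V} (h : G.Reachable v u) (hne : v ≠ u) :
    ∃ w, G.Adj v w ∧ G.dist w u + 1 = G.dist v u := by
  obtain ⟨p, hp⟩ := h.exists_walk_length_eq_dist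
  obtain ⟨w, hadj, q, rfl⟩ := p.exists_eq_cons_of_ne hne
  obtain ⟨q', hq'⟩ := (hadj.symm.reachable.trans h).exists_walk_length_eq_dist
  have hle : G.dist w u ≤ q.length := dist_le q
  have hge : G.dist v u ≤ q'.length + 1 := dist_le (Walk.cons hadj q')
  simp only [Walk.length_cons] at hp
  exact ⟨w, hadj, by omega⟩

theorem eq_or_eq_of_card_filter_ne_zero_le_two {ρ κ R : Type*} [Fintype ρ] [Zero R]
    [DecidableEq R] (M : Matrix ρ κ R) {c : κ} (hc : (univ.filter fun i => M i c ≠ 0).card ≤ 2) {i j k : ρ} (hij : i ≠ j)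
    (hi : M i c ≠ 0) (hj : M j c ≠ 0) (hk : M k c ≠ 0) : k = i ∨ k = j := by
  classical
  have hsupp : {i, j} = univ.filter fun i => M i c ≠ 0 :=
    eq_of_subset_of_card_le (by simp [insert_subset_iff, hi, hj])
      (by rwa [card_pair hij])
  have hk' : k ∈ ({i, j} : Finset ρ) := hsupp ▸ mem_filter.mpr ⟨mem_univ k, hk⟩
  simpa using hk'

theorem det_submatrix_ne_zero_of_rowGraph_connected {ρ κ : Type*} [Fintype ρ] [Fintype κ]
    [DecidableEq κ] (M : Matrix ρ κ ℝ)
    (hcol : ∀ c, (univ.filter fun i => M i c ≠ 0).card ≤ 2)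
    (hconn : (rowGraph M).Connected) (r : κ → ρ) (hr : Function.Injective r) (i₀ : ρ)
    (hr₀ : ∀ k, r k ≠ i₀) : (M.submatrix r id).det ≠ 0 := by
  set d : ρ → ℕ := fun v => (rowGraph M).dist v i₀
  have hparent : ∀ k, ∃ w c, d w + 1 = d (r k) ∧ M (r k) c ≠ 0 ∧ M w c ≠ 0 := fun k => by
    obtain ⟨w, ⟨-, c, hkc, hwc⟩, hdist⟩ :=
      (hconn.preconnected (r k) i₀).exists_adj_dist_add_one_eq (hr₀ k)
    exact ⟨w, c, hdist, hkc, hwc⟩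
  choose par col hpar hr_col hpar_col using hparent
  have hsupp : ∀ k v, M v (col k) ≠ 0 → v = r k ∨ v = par k := fun k v hv =>
    eq_or_eq_of_card_filter_ne_zero_le_two M (hcol _)
      (ne_of_apply_ne d (by have := hpar k; omega)) (hr_col k) (hpar_col k) hv
  have hlt : ∀ i j, i ≠ j → M (r i) (col j) ≠ 0 → d (r i) < d (r j) := fun i j hij h => by
    obtain hi | hi := hsupp j (r i) h
    · exact absurd (hr hi) hij
    · rw [hi, ← hpar j]; exact Nat.lt_succ_self _
  have hinj : Function.Injective col := fun i j hij => by
    by_contra hne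
    have h₁ := hlt i j hne (hij ▸ hr_col i)
    have h₂ := hlt j i (Ne.symm hne) (hij ▸ hr_col j)
    omega
  exact det_ne_zero_of_injective_of_lt_of_ne_zero (M.submatrix r id) col hinj (d ∘ r) hr_col hlt

theorem tree_glue_delete_row_nonsingular_general {n : ℕ} (G : Matrix (Fin (n + 1)) (Fin n) ℝ)
    (hcol : ∀ c, (Finset.univ.filter fun i => G i c ≠ 0).card = 2)
    (htree : (rowGraph G).IsTree) :
    ∀ i₀ : Fin (n + 1), IsUnit (G.submatrix i₀.succAbove id).det := fun i₀ =>
  isUnit_iff_ne_zero.mpr <| det_submatrix_ne_zero_of_rowGraph_connected G (fun c => (hcol c).le)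
    htree.connected i₀.succAbove Fin.succAbove_right_injective i₀ i₀.succAbove_ne

/-- Lemma 3 to Theorem 5 (first part): if every column of `G` has exactly two nonzero
entries, the row graph of `G` is a tree, and every non-loop edge of the row graph has
weight 1 (no two rows share nonzeros in more than one common column), then removing any
single row of `G` leaves a nonsingular (square) matrix. -/
theorem tree_glue_delete_row_nonsingular {n : ℕ} (G : Matrix (Fin (n + 1)) (Fin n) ℝ)
    (hcol : ∀ c, (Finset.univ.filter fun i => G i c ≠ 0).card = 2)
    (htree : (rowGraph G).IsTree)
    (hweight : ∀ i j, i ≠ j →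
      (Finset.univ.filter fun c => G i c ≠ 0 ∧ G j c ≠ 0).card ≤ 1) :
    ∀ i₀ : Fin (n + 1), IsUnit (G.submatrix i₀.succAbove id).det :=
  tree_glue_delete_row_nonsingular_general G hcol htree
end
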